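/- arXiv:2208.06496 — 4 statements merged into one kernel-verified Lean document; each statement's English description precedes it below -/
import Mathlib

section
/- For every h ∈ ℝⁿ the candidate-state map h ↦ c(h) = Φ(W_c x + U_c (r(h) ⊙ h) + b_c) is (Fréchet) differentiable at h, with derivative v ↦ Φ'(z) ⊙ (U_c (h ⊙ ((r(h) ⊙ (1 − r(h))) ⊙ (U_r v)) + r(h) ⊙ v)), where z = W_c x + U_c (r(h) ⊙ h) + b_c and Φ'(t) = 1 − tanh(t)² is applied entrywise; and the operator 2-norm of this derivative satisfies ‖D c(h)‖₂ ≤ (δ_r ‖U_r‖₂ max_i |h_i| + max_i r(h)_i) ‖U_c‖₂, where δ_r = max_i r(h)_i (1 − r(h)_i). -/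
/-!
The candidate-state map is the composite of entrywise `tanh`, an affine map with linear part
`U_c`, and the Hadamard product `h ↦ r(h) ⊙ h`, where `r` is entrywise `σ` after an affine map
with linear part `U_r`. Entrywise maps have diagonal Jacobians and `σ' = σ (1 - σ)`, so the
chain and product rules give
`D c(h) = diag(Φ'(z)) U_c (diag(h) diag(r(h) ⊙ (1 - r(h))) U_r + diag(r(h)))`.
For the bound, the ℓ²-operator norm is submultiplicative, a diagonal matrix has ℓ²-operator norm
the largest modulus of its entries, and `0 < Φ' ≤ 1`.
-/

noncomputable section

/-- The sigmoid function `σ(t) = 1/(1+exp(-t))`. -/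
def sigmoid (t : ℝ) : ℝ := 1 / (1 + Real.exp (-t))

/-- The operator norm of a square matrix induced by the Euclidean norm. -/
def opNorm2 {n : ℕ} (M : Matrix (Fin n) (Fin n) ℝ) : ℝ :=
  ‖Matrix.toEuclideanCLM (𝕜 := ℝ) M‖

open Matrix WithLp

open scoped Matrix.Norms.L2Operator

lemma sigmoid_eq_real_sigmoid : sigmoid = Real.sigmoid :=
  funext fun t => one_div (1 + Real.exp (-t))

lemma hasDerivAt_sigmoid (t : ℝ) : HasDerivAt sigmoid (sigmoid t * (1 - sigmoid t)) t :=
  sigmoid_eq_real_sigmoid ▸ Real.hasDerivAt_sigmoid t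

lemma sigmoid_nonneg (t : ℝ) : 0 ≤ sigmoid t :=
  sigmoid_eq_real_sigmoid ▸ Real.sigmoid_nonneg t

lemma sigmoid_le_one (t : ℝ) : sigmoid t ≤ 1 :=
  sigmoid_eq_real_sigmoid ▸ Real.sigmoid_le_one t

lemma Real.hasDerivAt_tanh (t : ℝ) : HasDerivAt Real.tanh (1 - Real.tanh t ^ 2) t := by
  have hcosh : Real.cosh t ≠ 0 := (Real.cosh_pos t).ne'
  rw [show Real.tanh = fun s => Real.sinh s / Real.cosh s from funext Real.tanh_eq_sinh_div_cosh]
  refine ((Real.hasDerivAt_sinh t).div (Real.hasDerivAt_cosh t) hcosh).congr_deriv ?_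
  field_simp

lemma Real.abs_one_sub_tanh_sq_le_one (t : ℝ) : |1 - Real.tanh t ^ 2| ≤ 1 := by
  rw [abs_of_nonneg (sub_nonneg.2 (Real.tanh_sq_lt_one t).le)]
  exact sub_le_self 1 (sq_nonneg _)

lemma hasFDerivAt_piLp {𝕜 ι H : Type*} {E : ι → Type*} [NontriviallyNormedField 𝕜]
    [NormedAddCommGroup H] [NormedSpace 𝕜 H] [∀ i, NormedAddCommGroup (E i)]
    [∀ i, NormedSpace 𝕜 (E i)] [Finite ι] (p : ENNReal) [Fact (1 ≤ p)] {f : H → PiLp p E}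
    {f' : H →L[𝕜] PiLp p E} {y : H} :
    HasFDerivAt f f' y ↔ ∀ i, HasFDerivAt (fun x => f x i) (PiLp.proj p E i ∘L f') y := by
  simp only [← hasFDerivWithinAt_univ]
  exact hasFDerivWithinAt_piLp p

section

variable {ι : Type*} [Fintype ι] [DecidableEq ι]

lemma hasFDerivAt_entrywise {f : ℝ → ℝ} {d : ι → ℝ} {z : EuclideanSpace ℝ ι}
    (hf : ∀ i, HasDerivAt f (d i) (z i)) :
    HasFDerivAt (fun y : EuclideanSpace ℝ ι => toLp 2 fun i => f (y i))
      (toEuclideanCLM (𝕜 := ℝ) (diagonal d)) z := by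
  rw [hasFDerivAt_piLp]
  intro i
  refine ((hf i).comp_hasFDerivAt (f := fun y : EuclideanSpace ℝ ι => y i) z
    (PiLp.hasFDerivAt_apply 2 z i)).congr_fderiv ?_
  ext v
  simp [mulVec_diagonal]

lemma hasFDerivAt_add_mulVec_add (a b : ι → ℝ) (M : Matrix ι ι ℝ) (y : EuclideanSpace ℝ ι) :
    HasFDerivAt (fun w : EuclideanSpace ℝ ι => toLp 2 fun i => a i + (M *ᵥ ofLp w) i + b i)
      (toEuclideanCLM (𝕜 := ℝ) M) y :=
  ((toEuclideanCLM (𝕜 := ℝ) M).hasFDerivAt.const_add (toLp 2 a)).add_const (toLp 2 b)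

lemma HasFDerivAt.hadamard_mul {f g : EuclideanSpace ℝ ι → EuclideanSpace ℝ ι}
    {A B : Matrix ι ι ℝ} {y : EuclideanSpace ℝ ι}
    (hf : HasFDerivAt f (toEuclideanCLM (𝕜 := ℝ) A) y)
    (hg : HasFDerivAt g (toEuclideanCLM (𝕜 := ℝ) B) y) :
    HasFDerivAt (fun w => toLp 2 fun i => f w i * g w i)
      (toEuclideanCLM (𝕜 := ℝ)
        (diagonal (fun i => g y i) * A + diagonal (fun i => f y i) * B)) y := by
  rw [hasFDerivAt_piLp]
  intro i
  have hfi : HasFDerivAt (fun w => f w i) (PiLp.proj 2 _ i ∘L toEuclideanCLM (𝕜 := ℝ) A) y :=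
    (PiLp.hasFDerivAt_apply 2 (f y) i).comp (g := fun v : EuclideanSpace ℝ ι => v i) y hf
  have hgi : HasFDerivAt (fun w => g w i) (PiLp.proj 2 _ i ∘L toEuclideanCLM (𝕜 := ℝ) B) y :=
    (PiLp.hasFDerivAt_apply 2 (g y) i).comp (g := fun v : EuclideanSpace ℝ ι => v i) y hg
  refine (hfi.mul hgi).congr_fderiv ?_
  ext v
  simp [mulVec_diagonal, add_comm]

lemma HasFDerivAt.matrix_comp {f g : EuclideanSpace ℝ ι → EuclideanSpace ℝ ι}
    {A B : Matrix ι ι ℝ} {y : EuclideanSpace ℝ ι}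
    (hg : HasFDerivAt g (toEuclideanCLM (𝕜 := ℝ) A) (f y))
    (hf : HasFDerivAt f (toEuclideanCLM (𝕜 := ℝ) B) y) :
    HasFDerivAt (g ∘ f) (toEuclideanCLM (𝕜 := ℝ) (A * B)) y := by
  rw [map_mul]
  exact hg.comp y hf

lemma Matrix.l2_opNorm_diagonal_le {d : ι → ℝ} {b : ℝ} (hb : 0 ≤ b) (hd : ∀ i, |d i| ≤ b) :
    ‖diagonal d‖ ≤ b := by
  rw [l2_opNorm_diagonal]
  exact (pi_norm_le_iff_of_nonneg hb).2 hd

lemma Matrix.l2_opNorm_diagonal_le_iSup_abs (d : ι → ℝ) : ‖diagonal d‖ ≤ ⨆ i, |d i| :=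
  l2_opNorm_diagonal_le (Real.iSup_nonneg fun _ => abs_nonneg _)
    fun i => le_ciSup (f := fun i => |d i|) (Set.finite_range _).bddAbove i

lemma Matrix.l2_opNorm_diagonal_le_iSup {d : ι → ℝ} (hd : ∀ i, 0 ≤ d i) :
    ‖diagonal d‖ ≤ ⨆ i, d i := by
  simpa only [abs_of_nonneg (hd _)] using l2_opNorm_diagonal_le_iSup_abs d

lemma Matrix.l2_opNorm_gru_jacobian_le {d a s q : ι → ℝ} (U V : Matrix ι ι ℝ)
    (hd : ∀ i, |d i| ≤ 1) (hs : ∀ i, 0 ≤ s i) (hq : ∀ i, 0 ≤ q i) :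
    ‖diagonal d * (U * (diagonal a * diagonal s * V + diagonal q))‖
      ≤ ((⨆ i, s i) * ‖V‖ * (⨆ i, |a i|) + ⨆ i, q i) * ‖U‖ := by
  have ha : 0 ≤ ⨆ i, |a i| := Real.iSup_nonneg fun _ => abs_nonneg _
  grw [norm_mul_le, norm_mul_le, norm_add_le, norm_mul_le, norm_mul_le,
    l2_opNorm_diagonal_le zero_le_one hd, l2_opNorm_diagonal_le_iSup_abs a,
    l2_opNorm_diagonal_le_iSup hs, l2_opNorm_diagonal_le_iSup hq]
  linarith

end

/-- the candidate-state map `h ↦ c(h) = Φ(W_c x + U_c (r(h) ⊙ h) + b_c)`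
(with `Φ = tanh` and `r(h) = σ(W_r x + U_r h + b_r)`) is Fréchet differentiable at every `h`,
with derivative `v ↦ Φ'(z) ⊙ (U_c (h ⊙ ((r(h) ⊙ (1 - r(h))) ⊙ (U_r v)) + r(h) ⊙ v))` where
`z = W_c x + U_c (r(h) ⊙ h) + b_c` and `Φ'(t) = 1 - tanh(t)²`, and the operator 2-norm of
this derivative is at most `(δ_r ‖U_r‖₂ max_i |h_i| + max_i r(h)_i) ‖U_c‖₂` with
`δ_r = max_i r(h)_i (1 - r(h)_i)`. -/
theorem candidate_state_deriv {n m : ℕ} (x : Fin m → ℝ)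
    (Wr Wc : Matrix (Fin n) (Fin m) ℝ) (Ur Uc : Matrix (Fin n) (Fin n) ℝ)
    (br bc : EuclideanSpace ℝ (Fin n)) (h : EuclideanSpace ℝ (Fin n)) :
    let r : EuclideanSpace ℝ (Fin n) → EuclideanSpace ℝ (Fin n) :=
      fun h => WithLp.toLp 2 (fun i => sigmoid (Wr.mulVec x i + Ur.mulVec h i + br i))
    let c : EuclideanSpace ℝ (Fin n) → EuclideanSpace ℝ (Fin n) :=
      fun h => WithLp.toLp 2 (fun i => Real.tanh (Wc.mulVec x i + Uc.mulVec (fun j => r h j * h j) i + bc i))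
    let z : Fin n → ℝ :=
      fun i => Wc.mulVec x i + Uc.mulVec (fun j => r h j * h j) i + bc i
    let J : Matrix (Fin n) (Fin n) ℝ :=
      Matrix.diagonal (fun i => 1 - Real.tanh (z i) ^ 2) *
        (Uc * (Matrix.diagonal (fun i => h i) * Matrix.diagonal (fun i => r h i * (1 - r h i)) * Ur
          + Matrix.diagonal (fun i => r h i)))
    HasFDerivAt c (Matrix.toEuclideanCLM (𝕜 := ℝ) J) h ∧
      (∀ v : EuclideanSpace ℝ (Fin n), ∀ i,
        Matrix.toEuclideanCLM (𝕜 := ℝ) J v i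
          = (1 - Real.tanh (z i) ^ 2) *
              Uc.mulVec (fun j => h j * ((r h j * (1 - r h j)) * Ur.mulVec v j) + r h j * v j) i) ∧
      ‖Matrix.toEuclideanCLM (𝕜 := ℝ) J‖
        ≤ ((⨆ i, r h i * (1 - r h i)) * opNorm2 Ur * (⨆ i, |h i|) + ⨆ i, r h i) * opNorm2 Uc := by
  intro r c z J
  have hJ_apply : ∀ (v : EuclideanSpace ℝ (Fin n)) i, toEuclideanCLM (𝕜 := ℝ) J v i
      = (1 - Real.tanh (z i) ^ 2) *
        (Uc *ᵥ fun j => h j * ((r h j * (1 - r h j)) * (Ur *ᵥ ofLp v) j) + r h j * v j) i := by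
    intro v i
    simp only [J, ofLp_toEuclideanCLM, ← mulVec_mulVec, add_mulVec, mulVec_diagonal]
    congr 2
    ext j
    simp only [Pi.add_apply, mulVec_diagonal]
  refine ⟨?_, hJ_apply, ?_⟩
  · have hr : HasFDerivAt r
        (toEuclideanCLM (𝕜 := ℝ) (diagonal (fun i => r h i * (1 - r h i)) * Ur)) h :=
      (hasFDerivAt_entrywise fun i => hasDerivAt_sigmoid _).matrix_comp
        (hasFDerivAt_add_mulVec_add _ _ Ur h)
    have hid : HasFDerivAt id (toEuclideanCLM (𝕜 := ℝ) (1 : Matrix (Fin n) (Fin n) ℝ)) h :=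
      map_one (toEuclideanCLM (𝕜 := ℝ) (n := Fin n)) ▸ hasFDerivAt_id h
    have hc := (hasFDerivAt_entrywise fun i => Real.hasDerivAt_tanh (z i)).matrix_comp
      ((hasFDerivAt_add_mulVec_add _ _ Uc _).matrix_comp (hr.hadamard_mul hid))
    exact hc.congr_fderiv (by simp only [J, id_eq, mul_one, mul_assoc])
  · exact l2_opNorm_gru_jacobian_le Uc Ur (fun i => Real.abs_one_sub_tanh_sq_le_one (z i))
      (fun i => mul_nonneg (sigmoid_nonneg _) (sub_nonneg.2 (sigmoid_le_one _)))
      (fun i => sigmoid_nonneg _)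
end
end

section
/- (Derivative of the scaled Cayley map) Fix a diagonal matrix D ∈ ℝ^{n×n} and define F(A) = (I + A)⁻¹ (I − A) D on the set of matrices A ∈ ℝ^{n×n} with I + A invertible. Then F is (Fréchet) differentiable at every such A, and its derivative in the direction Z ∈ ℝ^{n×n} is D F(A)[Z] = −(I + A)⁻¹ Z (F(A) + D). -/
/-! The derivative of `x ↦ (1 + x)⁻¹` at `a` is `z ↦ -(1 + a)⁻¹ z (1 + a)⁻¹`, so by the product
rule the derivative of `F x = (1 + x)⁻¹ (1 - x) d` is
`z ↦ -(1 + a)⁻¹ z (1 + a)⁻¹ (1 - a) d - (1 + a)⁻¹ z d = -(1 + a)⁻¹ z (F a + d)`.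
This holds in every complete normed algebra. The entrywise sup norm on matrices is not
submultiplicative, so the matrix case is transported along the algebra isomorphism with the
operators on Euclidean space, a homeomorphism because the dimension is finite. -/

open Matrix

noncomputable section

/- Equip matrix space with its (elementwise sup) norm; in finite dimension all norms are
equivalent, so Fréchet differentiability is the standard one on `ℝ^{n×n}`. -/
attribute [local instance] Matrix.normedAddCommGroup Matrix.normedSpace

open Ring

theorem map_ringInverse {M N F : Type*} [MonoidWithZero M] [MonoidWithZero N] [EquivLike F M N]
    [MulEquivClass F M N] (f : F) (a : M) : f a⁻¹ʳ = (f a)⁻¹ʳ := by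
  by_cases ha : IsUnit a
  · rw [← one_mul (f a)⁻¹ʳ, eq_mul_inverse_iff_mul_eq _ _ _ (ha.map f), ← map_mul,
      inverse_mul_cancel a ha, map_one]
  · rw [inverse_non_unit a ha, inverse_non_unit _ (by rwa [MulEquiv.isUnit_map]), map_zero]

open ContinuousLinearMap in
theorem hasFDerivAt_ringInverse_one_add_mul_one_sub_mul_const {𝕜 R : Type*}
    [NontriviallyNormedField 𝕜] [NormedRing R] [NormedAlgebra 𝕜 R] [HasSummableGeomSeries R]
    {a : R} (ha : IsUnit (1 + a)) (d : R) :
    HasFDerivAt (fun x : R => (1 + x)⁻¹ʳ * (1 - x) * d)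
      (-mulLeftRight 𝕜 R (1 + a)⁻¹ʳ ((1 + a)⁻¹ʳ * (1 - a) * d + d)) a := by
  obtain ⟨u, hu⟩ := ha
  have hinv : HasFDerivAt (fun x : R => (1 + x)⁻¹ʳ)
      (-mulLeftRight 𝕜 R (1 + a)⁻¹ʳ (1 + a)⁻¹ʳ) a := by
    have h := hasFDerivAt_ringInverse (𝕜 := 𝕜) u
    rw [← inverse_unit, hu] at h
    exact h.comp a ((hasFDerivAt_id a).const_add 1)
  refine ((hinv.fun_mul' ((hasFDerivAt_id a).const_sub 1)).mul_const' d).congr_fderiv ?_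
  ext z
  simp [sub_mul, mul_sub, mul_assoc]

theorem Matrix.exists_hasFDerivAt_inv_one_add_mul_one_sub_mul_const {𝕜 m : Type*} [RCLike 𝕜]
    [Fintype m] [DecidableEq m] (D A : Matrix m m 𝕜) (hA : IsUnit (1 + A)) :
    ∃ L : Matrix m m 𝕜 →L[𝕜] Matrix m m 𝕜,
      HasFDerivAt (fun X : Matrix m m 𝕜 => (1 + X)⁻¹ * (1 - X) * D) L A ∧
      ∀ Z, L Z = -((1 + A)⁻¹ * Z * ((1 + A)⁻¹ * (1 - A) * D + D)) := by
  let φ := toEuclideanCLM (n := m) (𝕜 := 𝕜)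
  let ψ : Matrix m m 𝕜 ≃L[𝕜] (EuclideanSpace 𝕜 m →L[𝕜] EuclideanSpace 𝕜 m) :=
    φ.toAlgEquiv.toLinearEquiv.toContinuousLinearEquiv
  have hψ : ∀ X, ψ X = φ X := fun _ => rfl
  have hconj : (fun X : Matrix m m 𝕜 => (1 + X)⁻¹ * (1 - X) * D) =
      ψ.symm ∘ (fun x => (1 + x)⁻¹ʳ * (1 - x) * φ D) ∘ ψ := by
    funext X
    rw [Function.comp_apply, Function.comp_apply, ψ.eq_symm_apply]
    simp only [nonsing_inv_eq_ringInverse, hψ, map_mul, map_ringInverse, map_add, map_one,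
      map_sub]
  have hunit : IsUnit (1 + ψ A) := by simpa only [hψ, map_add, map_one] using hA.map φ
  have hcayley := hasFDerivAt_ringInverse_one_add_mul_one_sub_mul_const (𝕜 := 𝕜) hunit (φ D)
  refine ⟨_, hconj ▸ ψ.symm.hasFDerivAt.comp A (hcayley.comp A ψ.hasFDerivAt), ?_⟩
  intro Z
  show ψ.symm (-((1 + ψ A)⁻¹ʳ * ψ Z * ((1 + ψ A)⁻¹ʳ * (1 - ψ A) * φ D + φ D))) = _
  rw [ψ.symm_apply_eq]
  simp only [hψ, nonsing_inv_eq_ringInverse, map_neg, map_mul, map_ringInverse, map_add, map_one,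
    map_sub]

/-- Derivative of the scaled Cayley map: for a fixed diagonal matrix `D`,
the map `F(A) = (I + A)⁻¹ (I - A) D` is Fréchet differentiable at every `A` with `I + A`
invertible, and its derivative in the direction `Z` is `D F(A)[Z] = -(I + A)⁻¹ Z (F(A) + D)`. -/
theorem scaled_cayley_deriv {n : ℕ} (d : Fin n → ℝ) (A : Matrix (Fin n) (Fin n) ℝ)
    (hA : IsUnit (1 + A)) :
    let D : Matrix (Fin n) (Fin n) ℝ := Matrix.diagonal d
    let F : Matrix (Fin n) (Fin n) ℝ → Matrix (Fin n) (Fin n) ℝ :=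
      fun A => (1 + A)⁻¹ * (1 - A) * D
    ∃ L : Matrix (Fin n) (Fin n) ℝ →L[ℝ] Matrix (Fin n) (Fin n) ℝ,
      HasFDerivAt F L A ∧
      ∀ Z : Matrix (Fin n) (Fin n) ℝ, L Z = -((1 + A)⁻¹ * Z * (F A + D)) :=
  Matrix.exists_hasFDerivAt_inv_one_add_mul_one_sub_mul_const _ A hA
end
end

section
/- (scoRNN gradient formula, unconstrained form) Fix a diagonal matrix D ∈ ℝ^{n×n} with D² = I and define F(A) = (I + A)⁻¹ (I − A) D for A ∈ ℝ^{n×n} with I + A invertible. Let L : ℝ^{n×n} → ℝ be differentiable at W = F(A), and let G ∈ ℝ^{n×n} be its gradient there, i.e. D L(W)[H] = tr(Gᵀ H) for all H ∈ ℝ^{n×n}. Then the composite A ↦ L(F(A)) is differentiable at A and, for every direction Z ∈ ℝ^{n×n}, D (L ∘ F)(A)[Z] = −tr(Vᵀ Z), where V = (I + A)⁻ᵀ G (D + Wᵀ). -/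
/-!
By the product rule and the derivative `Z ↦ -(1 + A)⁻¹ Z (1 + A)⁻¹` of inversion, the Cayley map
`F(A) = (1 + A)⁻¹ (1 - A) D` has derivative `Z ↦ -(1 + A)⁻¹ Z (D + W)`. Composing with `L` and
moving the outer factors of `tr (Gᵀ (1 + A)⁻¹ Z (D + W))` across the trace by cyclicity turns the
derivative into `-tr (Vᵀ Z)`, using `Dᵀ = D`.
-/

open ContinuousLinearMap in
theorem hasFDerivAt_cayley {𝕜 R : Type*} [NontriviallyNormedField 𝕜] [NormedRing R]
    [HasSummableGeomSeries R] [NormedAlgebra 𝕜 R] {a : R} (ha : IsUnit (1 + a)) (d : R) :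
    HasFDerivAt (fun x => Ring.inverse (1 + x) * (1 - x) * d)
      (-mulLeftRight 𝕜 R (Ring.inverse (1 + a)) (d + Ring.inverse (1 + a) * (1 - a) * d)) a := by
  obtain ⟨u, hu⟩ := ha
  have hinv : HasFDerivAt (fun x : R => Ring.inverse (1 + x))
      (-mulLeftRight 𝕜 R (Ring.inverse (1 + a)) (Ring.inverse (1 + a))) a := by
    have h := hasFDerivAt_ringInverse (𝕜 := 𝕜) u
    rw [← Ring.inverse_unit, hu] at h
    exact h.comp a ((hasFDerivAt_id a).const_add 1)
  refine ((hinv.mul' ((hasFDerivAt_id a).const_sub 1)).mul_const' d).congr_fderiv ?_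
  ext z
  simp only [add_apply, neg_apply, smul_apply, id_apply, id_eq, mulLeftRight_apply, smul_eq_mul,
    MulOpposite.smul_eq_mul_unop, MulOpposite.unop_op]
  noncomm_ring

open Matrix

section

/- The operator norm makes matrices a complete normed algebra, as `hasFDerivAt_cayley` requires. -/
attribute [local instance] Matrix.linftyOpNormedRing Matrix.linftyOpNormedAlgebra

open ContinuousLinearMap in
theorem Matrix.hasFDerivAt_cayley {𝕜 m : Type*} [NontriviallyNormedField 𝕜] [CompleteSpace 𝕜]
    [Fintype m] [DecidableEq m] {A : Matrix m m 𝕜} (hA : IsUnit (1 + A)) (D : Matrix m m 𝕜) :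
    HasFDerivAt (fun X => (1 + X)⁻¹ * (1 - X) * D)
      (-mulLeftRight 𝕜 (Matrix m m 𝕜) (1 + A)⁻¹ (D + (1 + A)⁻¹ * (1 - A) * D)) A := by
  have : HasSummableGeomSeries (Matrix m m 𝕜) :=
    @instHasSummableGeomSeriesOfCompleteSpace _ _ (FiniteDimensional.complete 𝕜 _)
  simpa only [← nonsing_inv_eq_ringInverse] using _root_.hasFDerivAt_cayley (𝕜 := 𝕜) hA D

end

theorem Matrix.trace_transpose_mul_mul_mul {m R : Type*} [Fintype m] [CommRing R]
    (G P Z Q : Matrix m m R) :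
    (Gᵀ * (P * Z * Q)).trace = ((Pᵀ * G * Qᵀ)ᵀ * Z).trace := by
  rw [transpose_mul, transpose_mul, transpose_transpose, transpose_transpose, ← Matrix.mul_assoc,
    trace_mul_comm, Matrix.mul_assoc, Matrix.mul_assoc]

/- Equip matrix space with its (elementwise sup) norm; in finite dimension all norms are
equivalent, so Fréchet differentiability is the standard one on `ℝ^{n×n}`. -/
attribute [local instance] Matrix.normedAddCommGroup Matrix.normedSpace

theorem scoRNN_gradient_formula_general {n : ℕ} (d : Fin n → ℝ)
    (A G : Matrix (Fin n) (Fin n) ℝ) (hA : IsUnit (1 + A))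
    (L : Matrix (Fin n) (Fin n) ℝ → ℝ) (L' : Matrix (Fin n) (Fin n) ℝ →L[ℝ] ℝ)
    (hL : HasFDerivAt L L' ((1 + A)⁻¹ * (1 - A) * Matrix.diagonal d))
    (hG : ∀ H : Matrix (Fin n) (Fin n) ℝ, L' H = (Gᵀ * H).trace) :
    let D : Matrix (Fin n) (Fin n) ℝ := Matrix.diagonal d
    let W : Matrix (Fin n) (Fin n) ℝ := (1 + A)⁻¹ * (1 - A) * D
    let V : Matrix (Fin n) (Fin n) ℝ := ((1 + A)⁻¹)ᵀ * G * (D + Wᵀ)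
    ∃ L'' : Matrix (Fin n) (Fin n) ℝ →L[ℝ] ℝ,
      HasFDerivAt (fun A => L ((1 + A)⁻¹ * (1 - A) * D)) L'' A ∧
      ∀ Z : Matrix (Fin n) (Fin n) ℝ, L'' Z = -(Vᵀ * Z).trace := by
  intro D W V
  refine ⟨_, hL.comp A (Matrix.hasFDerivAt_cayley hA D), fun Z => ?_⟩
  have hV : V = ((1 + A)⁻¹)ᵀ * G * (D + W)ᵀ := by
    simp only [V, D, transpose_add, diagonal_transpose]
  rw [hV, ← trace_transpose_mul_mul_mul, ← hG]
  exact map_neg L' _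

/-- scoRNN gradient formula, unconstrained form: with `D` diagonal, `D² = I`,
`F(A) = (I + A)⁻¹ (I - A) D`, `I + A` invertible, `L : ℝ^{n×n} → ℝ` differentiable at
`W = F(A)` with gradient `G` (i.e. `D L(W)[H] = tr(Gᵀ H)` for all `H`), the composite
`A ↦ L(F(A))` is differentiable at `A` and its derivative in any direction `Z` is
`-tr(Vᵀ Z)`, where `V = (I + A)⁻ᵀ G (D + Wᵀ)`. -/
theorem scoRNN_gradient_formula {n : ℕ} (d : Fin n → ℝ) (hd : ∀ i, d i * d i = 1)
    (A G : Matrix (Fin n) (Fin n) ℝ) (hA : IsUnit (1 + A))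
    (L : Matrix (Fin n) (Fin n) ℝ → ℝ) (L' : Matrix (Fin n) (Fin n) ℝ →L[ℝ] ℝ)
    (hL : HasFDerivAt L L' ((1 + A)⁻¹ * (1 - A) * Matrix.diagonal d))
    (hG : ∀ H : Matrix (Fin n) (Fin n) ℝ, L' H = (Gᵀ * H).trace) :
    let D : Matrix (Fin n) (Fin n) ℝ := Matrix.diagonal d
    let W : Matrix (Fin n) (Fin n) ℝ := (1 + A)⁻¹ * (1 - A) * D
    let V : Matrix (Fin n) (Fin n) ℝ := ((1 + A)⁻¹)ᵀ * G * (D + Wᵀ)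
    ∃ L'' : Matrix (Fin n) (Fin n) ℝ →L[ℝ] ℝ,
      HasFDerivAt (fun A => L ((1 + A)⁻¹ * (1 - A) * D)) L'' A ∧
      ∀ Z : Matrix (Fin n) (Fin n) ℝ, L'' Z = -(Vᵀ * Z).trace :=
  scoRNN_gradient_formula_general d A G hA L L' hL hG
end

section
/- (scoRNN gradient formula on the skew-symmetric subspace) In the setting where F(A) = (I + A)⁻¹ (I − A) D with D diagonal, D² = I, I + A invertible, L : ℝ^{n×n} → ℝ differentiable at W = F(A) with gradient G (i.e. D L(W)[H] = tr(Gᵀ H)), and V = (I + A)⁻ᵀ G (D + Wᵀ): for every skew-symmetric direction Z ∈ ℝ^{n×n} (Zᵀ = −Z), the directional derivative of A ↦ L(F(A)) at A in direction Z equals (1/2) tr((Vᵀ − V)ᵀ Z). In other words, the Riemannian gradient of L ∘ F at A with respect to the Frobenius inner product, restricted to the subspace of skew-symmetric matrices, is (1/2)(Vᵀ − V), which is itself skew-symmetric. -/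
/-! The derivative of `B ↦ B⁻¹` at `X` is `Z ↦ -X⁻¹ Z X⁻¹`, so the product rule gives
`F'(A) Z = -(I + A)⁻¹ Z (D + W)`. By the chain rule and cyclicity of the trace (with `Dᵀ = D`),
`D(L ∘ F)(A) Z = tr(Gᵀ F'(A) Z) = -tr(Vᵀ Z)`. For skew `Z`, `tr(V Z) = -tr(Vᵀ Z)`, hence
`-tr(Vᵀ Z) = (1/2) tr((V - Vᵀ) Z)`. -/

open Matrix

noncomputable section

/- Equip matrix space with its (elementwise sup) norm; in finite dimension all norms are
equivalent, so Fréchet differentiability is the standard one on `ℝ^{n×n}`. -/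
attribute [local instance] Matrix.normedAddCommGroup Matrix.normedSpace

section MatrixCalculus

variable {𝕜 : Type*} [NontriviallyNormedField 𝕜] [CompleteSpace 𝕜] {l m n : Type*}
  [Fintype l] [Fintype m] [Fintype n]

namespace Matrix

/- The entrywise sup norm is not submultiplicative, so the normed-ring calculus of Mathlib does
not apply; continuity of the product comes from finite dimensionality instead. -/
def mulCLM : Matrix l m 𝕜 →L[𝕜] Matrix m n 𝕜 →L[𝕜] Matrix l n 𝕜 :=
  (mulLinearMap 𝕜).toContinuousBilinearMap

end Matrix

open Asymptotics Filter Topology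

theorem HasFDerivAt.matrix_mul {E : Type*} [NormedAddCommGroup E] [NormedSpace 𝕜 E]
    {f : E → Matrix l m 𝕜} {g : E → Matrix m n 𝕜} {f' : E →L[𝕜] Matrix l m 𝕜}
    {g' : E →L[𝕜] Matrix m n 𝕜} {x : E} (hf : HasFDerivAt f f' x) (hg : HasFDerivAt g g' x) :
    HasFDerivAt (fun y => f y * g y) (mulCLM.precompR E (f x) g' + mulCLM.precompL E f' (g x)) x :=
  mulCLM.hasFDerivAt_of_bilinear hf hg

/-- Near an invertible `X`, `B⁻¹ - X⁻¹ + X⁻¹ (B - X) X⁻¹ = (X⁻¹ - B⁻¹) (B - X) X⁻¹`, a product of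
a vanishing factor and a factor of size `O(B - X)`. -/
theorem hasFDerivAt_matrix_inv [DecidableEq m] {X : Matrix m m 𝕜} (hX : IsUnit X) :
    HasFDerivAt (fun B : Matrix m m 𝕜 => B⁻¹) (-(mulCLM X⁻¹).comp (mulCLM.flip X⁻¹)) X := by
  have hdet : X.det ≠ 0 := ((isUnit_iff_isUnit_det X).mp hX).ne_zero
  have hcont : Tendsto (fun B : Matrix m m 𝕜 => B⁻¹) (𝓝 X) (𝓝 X⁻¹) :=
    continuousAt_matrix_inv X (by simpa [Ring.inverse_eq_inv'] using continuousAt_inv₀ hdet)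
  have hunit : ∀ᶠ B in 𝓝 X, IsUnit B := by
    filter_upwards [continuous_id.matrix_det.continuousAt.eventually_ne hdet] with B hB
    exact (isUnit_iff_isUnit_det B).mpr (isUnit_iff_ne_zero.mpr hB)
  refine hasFDerivAt_iff_isLittleO.2 ?_
  have hremainder : (fun B => B⁻¹ - X⁻¹ - (-(mulCLM X⁻¹).comp (mulCLM.flip X⁻¹)) (B - X))
      =ᶠ[𝓝 X] fun B => mulCLM (X⁻¹ - B⁻¹) (mulCLM.flip X⁻¹ (B - X)) := by
    filter_upwards [hunit] with B hB
    have hB' : B⁻¹ * B = 1 := nonsing_inv_mul B ((isUnit_iff_isUnit_det B).mp hB)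
    have hX' : X * X⁻¹ = 1 := mul_nonsing_inv X ((isUnit_iff_isUnit_det X).mp hX)
    change B⁻¹ - X⁻¹ - -(X⁻¹ * ((B - X) * X⁻¹)) = (X⁻¹ - B⁻¹) * ((B - X) * X⁻¹)
    linear_combination (norm := noncomm_ring) hB' * X⁻¹ - B⁻¹ * hX'
  refine IsLittleO.congr' ?_ hremainder.symm EventuallyEq.rfl
  have hsmall : (fun B : Matrix m m 𝕜 => X⁻¹ - B⁻¹) =o[𝓝 X] (fun _ => (1 : ℝ)) :=
    (isLittleO_one_iff ℝ).2 (sub_self X⁻¹ ▸ tendsto_const_nhds.sub hcont)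
  have hlin := ((mulCLM.flip X⁻¹).isBigO_sub (𝓝 X) X).norm_norm
  exact mulCLM.isBoundedBilinearMap.isBigO_comp.trans_isLittleO
    ((hsmall.norm_left.mul_isBigO hlin).trans_isBigO (by simpa using (isBigO_refl _ _).norm_left))

theorem hasFDerivAt_scaledCayley [DecidableEq m] {A : Matrix m m 𝕜} (hA : IsUnit (1 + A))
    (D : Matrix m m 𝕜) :
    HasFDerivAt (fun B : Matrix m m 𝕜 => (1 + B)⁻¹ * (1 - B) * D)
      (-(mulCLM (1 + A)⁻¹).comp (mulCLM.flip (D + (1 + A)⁻¹ * (1 - A) * D))) A := by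
  have hinv := HasFDerivAt.comp A (hasFDerivAt_matrix_inv hA) ((hasFDerivAt_id A).const_add 1)
  refine ((hinv.matrix_mul ((hasFDerivAt_id A).const_sub 1)).matrix_mul
    (hasFDerivAt_const D A)).congr_fderiv ?_
  ext1 Z
  change (1 + A)⁻¹ * (1 - A) * 0 + ((1 + A)⁻¹ * -Z + -((1 + A)⁻¹ * (Z * (1 + A)⁻¹)) * (1 - A)) * D
    = -((1 + A)⁻¹ * (Z * (D + (1 + A)⁻¹ * (1 - A) * D)))
  noncomm_ring

end MatrixCalculus

theorem Matrix.trace_mul_eq_neg_of_transpose_eq_neg {n R : Type*} [Fintype n] [CommRing R]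
    (X : Matrix n n R) {Z : Matrix n n R} (hZ : Zᵀ = -Z) : (X * Z).trace = -(Xᵀ * Z).trace := by
  rw [← trace_transpose, transpose_mul, hZ, neg_mul, trace_neg, trace_mul_comm]

theorem scoRNN_riemannian_gradient_general {n : ℕ} (d : Fin n → ℝ)
    (A G : Matrix (Fin n) (Fin n) ℝ) (hA : IsUnit (1 + A))
    (L : Matrix (Fin n) (Fin n) ℝ → ℝ) (L' : Matrix (Fin n) (Fin n) ℝ →L[ℝ] ℝ)
    (hL : HasFDerivAt L L' ((1 + A)⁻¹ * (1 - A) * Matrix.diagonal d))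
    (hG : ∀ H : Matrix (Fin n) (Fin n) ℝ, L' H = (Gᵀ * H).trace) :
    let D : Matrix (Fin n) (Fin n) ℝ := Matrix.diagonal d
    let W : Matrix (Fin n) (Fin n) ℝ := (1 + A)⁻¹ * (1 - A) * D
    let V : Matrix (Fin n) (Fin n) ℝ := ((1 + A)⁻¹)ᵀ * G * (D + Wᵀ)
    (∀ Z : Matrix (Fin n) (Fin n) ℝ, Zᵀ = -Z →
      fderiv ℝ (fun A => L ((1 + A)⁻¹ * (1 - A) * D)) A Z
        = (1 / 2) * ((Vᵀ - V)ᵀ * Z).trace) ∧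
    ((1 / 2 : ℝ) • (Vᵀ - V))ᵀ = -((1 / 2 : ℝ) • (Vᵀ - V)) := by
  intro D W V
  have hVt : Vᵀ = (D + W) * Gᵀ * (1 + A)⁻¹ := by
    simp [V, D, transpose_mul, transpose_add, mul_assoc]
  have hderiv (Z : Matrix (Fin n) (Fin n) ℝ) :
      fderiv ℝ (fun A => L ((1 + A)⁻¹ * (1 - A) * D)) A Z = -(Vᵀ * Z).trace := by
    have hcomp : HasFDerivAt (fun A => L ((1 + A)⁻¹ * (1 - A) * D)) _ A :=
      hL.comp A (hasFDerivAt_scaledCayley hA D)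
    rw [hcomp.fderiv]
    change L' (-((1 + A)⁻¹ * (Z * (D + W)))) = _
    simp only [hG, hVt, mul_neg, trace_neg, mul_assoc]
    rw [trace_mul_comm (D + W)]
    simp only [mul_assoc]
  refine ⟨fun Z hZ => ?_, ?_⟩
  · rw [hderiv, transpose_sub, transpose_transpose, sub_mul, trace_sub,
      trace_mul_eq_neg_of_transpose_eq_neg V hZ]
    ring
  · rw [transpose_smul, transpose_sub, transpose_transpose, ← smul_neg, neg_sub]

/-- scoRNN gradient formula on the skew-symmetric subspace: with `D` diagonal,
`D² = I`, `F(A) = (I + A)⁻¹ (I - A) D`, `I + A` invertible, `L` differentiable at `W = F(A)`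
with gradient `G`, and `V = (I + A)⁻ᵀ G (D + Wᵀ)`: for every skew-symmetric direction `Z`,
the directional derivative of `A ↦ L(F(A))` at `A` in direction `Z` equals
`(1/2) tr((Vᵀ - V)ᵀ Z)`; moreover `(1/2)(Vᵀ - V)` is itself skew-symmetric. -/
theorem scoRNN_riemannian_gradient {n : ℕ} (d : Fin n → ℝ) (hd : ∀ i, d i * d i = 1)
    (A G : Matrix (Fin n) (Fin n) ℝ) (hA : IsUnit (1 + A))
    (L : Matrix (Fin n) (Fin n) ℝ → ℝ) (L' : Matrix (Fin n) (Fin n) ℝ →L[ℝ] ℝ)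
    (hL : HasFDerivAt L L' ((1 + A)⁻¹ * (1 - A) * Matrix.diagonal d))
    (hG : ∀ H : Matrix (Fin n) (Fin n) ℝ, L' H = (Gᵀ * H).trace) :
    let D : Matrix (Fin n) (Fin n) ℝ := Matrix.diagonal d
    let W : Matrix (Fin n) (Fin n) ℝ := (1 + A)⁻¹ * (1 - A) * D
    let V : Matrix (Fin n) (Fin n) ℝ := ((1 + A)⁻¹)ᵀ * G * (D + Wᵀ)
    (∀ Z : Matrix (Fin n) (Fin n) ℝ, Zᵀ = -Z →
      fderiv ℝ (fun A => L ((1 + A)⁻¹ * (1 - A) * D)) A Z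
        = (1 / 2) * ((Vᵀ - V)ᵀ * Z).trace) ∧
    ((1 / 2 : ℝ) • (Vᵀ - V))ᵀ = -((1 / 2 : ℝ) • (Vᵀ - V)) :=
  scoRNN_riemannian_gradient_general d A G hA L L' hL hG
end
end
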